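/- arXiv:1911.12698 — 9 statements merged into one kernel-verified Lean document; each statement's English description precedes it below -/
import Mathlib

section
/- In a finite T0 topological space X with specialization order ≤ (x ≤ y iff x ∈ cl{y}), a subset A is locally closed if and only if A is convex with respect to ≤ (i.e., x ≤ y ≤ z with x,z ∈ A implies y ∈ A). -/
/-!
Open sets are closed under generization and closed sets under specialization, so a locally
closed set is convex for the specialization order. Conversely, in a finite (more generally,
Alexandrov-discrete) space the closure of `s` consists of the specializations of points of `s`,
and convexity of `s` then says exactly that `closure s \ s` is closed under specialization, i.e.
closed; hence `s = (closure s \ s)ᶜ ∩ closure s` is locally closed.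
-/

open Set Topology

section

variable {X : Type*} [TopologicalSpace X] {s : Set X}

lemma IsLocallyClosed.mem_of_specializes {x y z : X} (hs : IsLocallyClosed s)
    (hyx : y ⤳ x) (hzy : z ⤳ y) (hx : x ∈ s) (hz : z ∈ s) : y ∈ s := by
  obtain ⟨U, C, hU, hC, rfl⟩ := hs
  exact ⟨hyx.mem_open hU hx.1, hzy.mem_closed hC hz.2⟩

lemma mem_closure_iff_exists_specializes [AlexandrovDiscrete X] {x : X} :
    x ∈ closure s ↔ ∃ a ∈ s, a ⤳ x := by
  have hclosure : closure s = ⋃ a ∈ s, closure {a} :=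
    (closure_minimal (fun a ha ↦ mem_biUnion ha (subset_closure (mem_singleton a)))
      (isClosed_iUnion₂ fun _ _ ↦ isClosed_closure)).antisymm
      (iUnion₂_subset fun _ ha ↦ closure_mono (singleton_subset_iff.2 ha))
  simp [hclosure, specializes_iff_mem_closure]

lemma isLocallyClosed_iff_forall_specializes [AlexandrovDiscrete X] :
    IsLocallyClosed s ↔ ∀ x y z, y ⤳ x → z ⤳ y → x ∈ s → z ∈ s → y ∈ s := by
  refine ⟨fun hs _ _ _ ↦ hs.mem_of_specializes, fun h ↦ ?_⟩
  rw [isLocallyClosed_iff_isOpen_coborder, coborder, isOpen_compl_iff,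
    ← closure_subset_iff_isClosed]
  intro y hy
  obtain ⟨x, ⟨hx_cl, hx_not⟩, hxy⟩ := mem_closure_iff_exists_specializes.1 hy
  obtain ⟨a, ha, hax⟩ := mem_closure_iff_exists_specializes.1 hx_cl
  exact ⟨hxy.mem_closed isClosed_closure hx_cl, fun hys ↦ hx_not (h y x a hxy hax hys ha)⟩

end

theorem stmt2_general {X : Type*} [TopologicalSpace X] [Finite X] (A : Set X) :
    (∃ U C : Set X, IsOpen U ∧ IsClosed C ∧ A = U ∩ C) ↔
      ∀ x y z : X, x ∈ closure {y} → y ∈ closure {z} → x ∈ A → z ∈ A → y ∈ A := by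
  simp only [← specializes_iff_mem_closure]
  exact isLocallyClosed_iff_forall_specializes

/-- In a finite `T0` space with specialization order `x ≤ y ↔ x ∈ cl {y}`, a subset is
locally closed iff it is convex with respect to the specialization order. -/
theorem stmt2 {X : Type*} [TopologicalSpace X] [Finite X] [T0Space X] (A : Set X) :
    (∃ U C : Set X, IsOpen U ∧ IsClosed C ∧ A = U ∩ C) ↔
      ∀ x y z : X, x ∈ closure {y} → y ∈ closure {z} → x ∈ A → z ∈ A → y ∈ A :=
  stmt2_general A
end

section
/- Every isolated invariant set S of a combinatorial multivector field V on a finite topological space is V-compatible: for each x ∈ X, either [x]_V ∩ S = ∅ or [x]_V ⊆ S. -/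
open CategoryTheory Limits

/-- A set is locally closed if it is the intersection of an open set and a closed set. -/
def IsLC {X : Type*} [TopologicalSpace X] (A : Set X) : Prop :=
  ∃ U C : Set X, IsOpen U ∧ IsClosed C ∧ A = U ∩ C

/-- The singular chain complex functor: the free abelian group on the singular
simplicial set, with the alternating face map differential. -/
noncomputable def singularChainsFunctor : TopCat ⥤ ChainComplex AddCommGrpCat ℕ :=
  TopCat.toSSet ⋙ ((SimplicialObject.whiskering _ _).obj AddCommGrpCat.free) ⋙
    AlgebraicTopology.alternatingFaceMapComplex AddCommGrpCat

/-- Relative singular homology `H_n(A, B)` of a pair of subsets `B ⊆ A` of a topological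
space: the homology of the quotient (cokernel) of singular chains of `B` in those of `A`. -/
noncomputable def relSingularHomology (X : Type) [TopologicalSpace X]
    (A B : Set X) (h : B ⊆ A) (n : ℕ) : AddCommGrpCat :=
  (Limits.cokernel (singularChainsFunctor.map
      (TopCat.ofHom ⟨Set.inclusion h, continuous_inclusion h⟩ : TopCat.of B ⟶ TopCat.of A))).homology n

/-- A combinatorial multivector field on `X`: a partition of `X` into nonempty locally
closed sets, encoded by the map sending `x` to the multivector `[x]_V` containing it. -/
structure MVField (X : Type) [TopologicalSpace X] where
  mv : X → Set X
  self_mem : ∀ x, x ∈ mv x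
  mv_eq : ∀ x y, y ∈ mv x → mv y = mv x
  lc : ∀ x, IsLC (mv x)

variable {X : Type} [TopologicalSpace X]

/-- The multivalued map `Π_V(x) = cl {x} ∪ [x]_V` induced by a multivector field. -/
def MVField.Pi (V : MVField X) (x : X) : Set X := closure {x} ∪ V.mv x

/-- A multivector is regular if the relative singular homology `H(cl V, mo V)` vanishes;
`x` is regular if its multivector `[x]_V` is regular. -/
def MVField.IsRegular (V : MVField X) (x : X) : Prop :=
  ∀ n, IsZero (relSingularHomology X (closure (V.mv x))
    (closure (V.mv x) \ V.mv x) Set.diff_subset n)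

/-- A full solution of the combinatorial dynamical system `Π_V`. -/
def MVField.IsSol (V : MVField X) (φ : ℤ → X) : Prop := ∀ t, φ (t + 1) ∈ V.Pi (φ t)

/-- An essential solution: a full solution which, whenever it is in a regular
multivector, leaves this multivector both in forward and in backward time. -/
def MVField.IsEssential (V : MVField X) (φ : ℤ → X) : Prop :=
  V.IsSol φ ∧ ∀ t, V.IsRegular (φ t) →
    (∀ m, ∃ k, m ≤ k ∧ φ k ∉ V.mv (φ t)) ∧ (∀ m, ∃ k, k ≤ m ∧ φ k ∉ V.mv (φ t))

/-- The invariant part of `A`: points of `A` through which an essential solution in `A`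
passes. -/
def MVField.InvPart (V : MVField X) (A : Set X) : Set X :=
  {x ∈ A | ∃ φ : ℤ → X, V.IsEssential φ ∧ φ 0 = x ∧ Set.range φ ⊆ A}

/-- `S` is invariant if it coincides with its invariant part. -/
def MVField.IsInvariant (V : MVField X) (S : Set X) : Prop := V.InvPart S = S

/-- `γ : ℕ → X` is (up to index `n`) a path of `Π_V` contained in `N`. -/
def MVField.IsPathIn (V : MVField X) (N : Set X) (n : ℕ) (γ : ℕ → X) : Prop :=
  (∀ i ≤ n, γ i ∈ N) ∧ ∀ i < n, γ (i + 1) ∈ V.Pi (γ i)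

/-- A closed set `N` isolates `S`: `S ⊆ N`, every path in `N` with endpoints in `S` is a
path in `S`, and `Π_V(S) ⊆ N`. -/
def MVField.Isolates (V : MVField X) (N S : Set X) : Prop :=
  IsClosed N ∧ S ⊆ N ∧
    (∀ n γ, V.IsPathIn N n γ → γ 0 ∈ S → γ n ∈ S → ∀ i ≤ n, γ i ∈ S) ∧
    ∀ x ∈ S, V.Pi x ⊆ N

/-- An isolated invariant set: an invariant set admitting a closed isolating set. -/
def MVField.IsIsolatedInvariant (V : MVField X) (S : Set X) : Prop :=
  V.IsInvariant S ∧ ∃ N, V.Isolates N S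

/-- `A` is `V`-compatible if every multivector is disjoint from `A` or contained in it. -/
def MVField.IsCompatible (V : MVField X) (A : Set X) : Prop :=
  ∀ x : X, V.mv x ∩ A = ∅ ∨ V.mv x ⊆ A

/-- Every isolated invariant set of a combinatorial multivector field on a finite
topological space is `V`-compatible. -/
theorem stmt11 {X : Type} [TopologicalSpace X] [Finite X] (V : MVField X) (S : Set X)
    (hS : V.IsIsolatedInvariant S) : V.IsCompatible S := by
  obtain ⟨-, N, hN, hSN, hpath, hPi⟩ := hS
  intro x
  by_cases h : V.mv x ∩ S = ∅
  · exact Or.inl h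
  · right
    obtain ⟨y, hyx, hyS⟩ := Set.nonempty_iff_ne_empty.2 h
    intro z hzx
    have hmy : V.mv y = V.mv x := V.mv_eq x y hyx
    have hzy : z ∈ V.mv y := hmy ▸ hzx
    have hmz : V.mv z = V.mv y := (V.mv_eq x z hzx).trans hmy.symm
    have hyz : y ∈ V.mv z := hmz ▸ V.self_mem y
    set γ : ℕ → X := fun i => if i = 1 then z else y with hγ
    have hpathIn : V.IsPathIn N 2 γ := by
      constructor
      · intro i _
        by_cases hi : i = 1
        · simp only [hγ, hi, if_pos rfl]
          exact hPi y hyS (Or.inr hzy)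
        · simp only [hγ, if_neg hi]
          exact hSN hyS
      · intro i hi
        interval_cases i
        · simpa [hγ, MVField.Pi] using Or.inr hzy
        · simpa [hγ, MVField.Pi] using Or.inr hyz
    have := hpath 2 γ hpathIn (by simp [hγ, hyS]) (by simp [hγ, hyS]) 1 (by norm_num)
    simpa [hγ] using this
end

section
/- Every isolated invariant set S of a combinatorial multivector field on a finite T0 topological space is locally closed. -/
open CategoryTheory Limits

variable {X : Type} [TopologicalSpace X]

/-- Every isolated invariant set of a combinatorial multivector field on a finite `T0`
topological space is locally closed. -/
theorem stmt12 {X : Type} [TopologicalSpace X] [Finite X] [T0Space X] (V : MVField X)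
    (S : Set X) (hS : V.IsIsolatedInvariant S) : IsLC S := by
  obtain ⟨-, N, hNcl, hSN, hpath, hPi⟩ := hS
  have conv : ∀ x y z : X, y ∈ S → x ∈ S → z ∈ closure {y} → x ∈ closure {z} → z ∈ S := by
    intro x y z hy hx hzy hxz
    set γ : ℕ → X := fun i => if i = 0 then y else if i = 1 then z else x with hγ
    have hzN : z ∈ N := hPi y hy (Or.inl hzy)
    have hp : V.IsPathIn N 2 γ := by
      constructor
      · intro i hi
        interval_cases i <;> simp [hγ, hSN hy, hzN, hSN hx]
      · intro i hi
        interval_cases i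
        · simpa [hγ, MVField.Pi] using Or.inl hzy
        · simpa [hγ, MVField.Pi] using Or.inl hxz
    have := hpath 2 γ hp (by simp [hγ, hy]) (by simp [hγ, hx]) 1 (by norm_num)
    simpa [hγ] using this
  refine ⟨nhdsKer S, closure S, isOpen_nhdsKer, isClosed_closure, ?_⟩
  apply Set.Subset.antisymm
  · exact Set.subset_inter subset_nhdsKer subset_closure
  · rintro z ⟨hzU, hzC⟩
    obtain ⟨x, hxS, hxz⟩ := mem_nhdsKer_iff_specializes.1 hzU
    have hcl : closure S = ⋃ y : S, closure ({y.1} : Set X) := by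
      rw [← closure_iUnion]
      ext w
      simp
    rw [hcl] at hzC
    obtain ⟨y, hzy⟩ := Set.mem_iUnion.1 hzC
    exact conv x y z y.2 hxS hzy hxz.mem_closure
end

section
/- If S is a locally closed, V-compatible invariant set for a combinatorial multivector field V on a finite topological space X, then S is an isolated invariant set, isolated by cl S. -/
open CategoryTheory Limits

variable {X : Type} [TopologicalSpace X]

/-- A locally closed, `V`-compatible invariant set is an isolated invariant set,
isolated by its closure. -/
theorem stmt13 {X : Type} [TopologicalSpace X] [Finite X] (V : MVField X) (S : Set X)
    (hlc : IsLC S) (hcomp : V.IsCompatible S) (hinv : V.IsInvariant S) :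
    V.Isolates (closure S) S ∧ V.IsIsolatedInvariant S := by
  obtain ⟨U, C, hU, hC, hSUC⟩ := hlc
  have hSU : S ⊆ U := fun x hx => (hSUC ▸ hx : x ∈ U ∩ C).1
  have hclC : closure S ⊆ C :=
    closure_minimal (fun x hx => (hSUC ▸ hx : x ∈ U ∩ C).2) hC
  have hmem : ∀ x ∈ closure S, x ∈ U → x ∈ S := by
    intro x hx hxU
    rw [hSUC]; exact ⟨hxU, hclC hx⟩
  have hmv : ∀ x ∈ S, V.mv x ⊆ S := by
    intro x hx
    rcases hcomp x with h | h
    · exact absurd h (by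
        rw [Set.eq_empty_iff_forall_notMem]
        push_neg
        exact ⟨x, V.self_mem x, hx⟩)
    · exact h
  have hPi : ∀ x ∈ S, V.Pi x ⊆ closure S := by
    intro x hx y hy
    rcases hy with hy | hy
    · exact closure_mono (Set.singleton_subset_iff.mpr hx) hy
    · exact subset_closure (hmv x hx hy)
  have step : ∀ x, x ∈ closure S → x ∉ S → ∀ y ∈ V.Pi x, y ∈ closure S → y ∉ S := by
    intro x hxcl hxS y hy hycl
    rcases hy with hy | hy
    · have hclosed : IsClosed (closure S ∩ Uᶜ) := isClosed_closure.inter hU.isClosed_compl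
      have hxin : x ∈ closure S ∩ Uᶜ := ⟨hxcl, fun hxU => hxS (hmem x hxcl hxU)⟩
      have hsub : closure {x} ⊆ closure S ∩ Uᶜ :=
        hclosed.closure_subset_iff.mpr (Set.singleton_subset_iff.mpr hxin)
      exact fun hyS => (hsub hy).2 (hSU hyS)
    · rcases hcomp x with h | h
      · exact fun hyS => (Set.eq_empty_iff_forall_notMem.mp h y) ⟨hy, hyS⟩
      · exact absurd (h (V.self_mem x)) hxS
  have hiso : V.Isolates (closure S) S := by
    refine ⟨isClosed_closure, subset_closure, ?_, hPi⟩
    intro n γ hγ h0 hn i hi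
    by_contra hiS
    have key : ∀ k, i + k ≤ n → γ (i + k) ∉ S := by
      intro k
      induction k with
      | zero => intro _; simpa using hiS
      | succ k ih =>
        intro hk
        have hk' : i + k ≤ n := by omega
        have h1 : γ (i + k) ∈ closure S := hγ.1 _ hk'
        have h2 : γ (i + k + 1) ∈ V.Pi (γ (i + k)) := hγ.2 _ (by omega)
        have h3 : γ (i + k + 1) ∈ closure S := hγ.1 _ hk
        exact step _ h1 (ih hk') _ h2 h3
    have := key (n - i) (by omega)
    rw [show i + (n - i) = n by omega] at this
    exact this hn
  exact ⟨hiso, hinv, ⟨closure S, hiso⟩⟩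
end

section
/- Every strongly connected component C of the digraph G_V associated with a combinatorial multivector field V on a finite topological space is V-compatible and locally closed (equivalently, convex in the specialization order). -/
open CategoryTheory Limits

variable {X : Type} [TopologicalSpace X]

/-- There is a directed path in the digraph `G_V` from `x` to `y`. -/
def MVField.Reach (V : MVField X) (x y : X) : Prop :=
  ∃ (n : ℕ) (γ : ℕ → X), γ 0 = x ∧ γ n = y ∧ ∀ i < n, γ (i + 1) ∈ V.Pi (γ i)

namespace MVField

lemma reach_iff (V : MVField X) (x y : X) :
    V.Reach x y ↔ Relation.ReflTransGen (fun a b => b ∈ V.Pi a) x y := by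
  constructor
  · rintro ⟨n, γ, h0, hn, hstep⟩
    subst h0 hn
    induction n with
    | zero => exact .refl
    | succ n ih =>
      exact (ih (fun i hi => hstep i (Nat.lt_succ_of_lt hi))).tail
        (hstep n (Nat.lt_succ_self n))
  · intro h
    induction h with
    | refl => exact ⟨0, fun _ => x, rfl, rfl, by omega⟩
    | @tail b c _ hbc ih =>
      obtain ⟨n, γ, h0, hn, hstep⟩ := ih
      refine ⟨n + 1, fun i => if i = n + 1 then c else γ i, by simp [h0], by simp, ?_⟩
      intro i hi
      rcases Nat.lt_succ_iff_lt_or_eq.mp hi with hlt | rfl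
      · simp only [Nat.ne_of_lt (Nat.succ_lt_succ hlt), if_false,
          Nat.ne_of_lt (Nat.lt_succ_of_lt hlt), if_false]
        exact hstep i hlt
      · simp [hn, hbc]

lemma reach_trans {V : MVField X} {x y z : X} (h1 : V.Reach x y) (h2 : V.Reach y z) :
    V.Reach x z := by
  rw [reach_iff] at *
  exact h1.trans h2

lemma reach_of_pi {V : MVField X} {x y : X} (h : y ∈ V.Pi x) : V.Reach x y :=
  (reach_iff V x y).mpr (Relation.ReflTransGen.single h)

lemma reach_of_mv {V : MVField X} {x y : X} (h : y ∈ V.mv x) : V.Reach x y :=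
  reach_of_pi (Or.inr h)

end MVField

/-- Every strongly connected component of the digraph `G_V` associated with a
combinatorial multivector field on a finite topological space is `V`-compatible and
locally closed. -/
theorem stmt14 {X : Type} [TopologicalSpace X] [Finite X] (V : MVField X) (C : Set X)
    (hC : ∃ x, x ∈ C ∧ C = {y : X | V.Reach x y ∧ V.Reach y x}) :
    V.IsCompatible C ∧ IsLC C := by
  obtain ⟨x, hx, rfl⟩ := hC
  have hconv : ∀ a b c : X, a ∈ {y : X | V.Reach x y ∧ V.Reach y x} →
      c ∈ {y : X | V.Reach x y ∧ V.Reach y x} → b ∈ closure {a} → c ∈ closure {b} →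
      b ∈ {y : X | V.Reach x y ∧ V.Reach y x} := by
    intro a b c ha hc hab hbc
    have rab : V.Reach a b := MVField.reach_of_pi (Or.inl hab)
    have rbc : V.Reach b c := MVField.reach_of_pi (Or.inl hbc)
    exact ⟨MVField.reach_trans ha.1 rab, MVField.reach_trans rbc hc.2⟩
  constructor
  · intro w
    by_cases hint : V.mv w ∩ {y : X | V.Reach x y ∧ V.Reach y x} = ∅
    · exact Or.inl hint
    · right
      obtain ⟨z, hz1, hz2⟩ := Set.nonempty_iff_ne_empty.mpr hint
      intro w' hw'
      have hzw : V.mv z = V.mv w := V.mv_eq w z hz1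
      have hww' : V.mv w' = V.mv w := V.mv_eq w w' hw'
      have r1 : V.Reach z w' := MVField.reach_of_mv (hzw ▸ hw')
      have r2 : V.Reach w' z := MVField.reach_of_mv (hww' ▸ hz1)
      exact ⟨MVField.reach_trans hz2.1 r1, MVField.reach_trans r2 hz2.2⟩
  · set C := {y : X | V.Reach x y ∧ V.Reach y x} with hCdef
    have hclosure : ∀ S : Set X, closure S = ⋃ a ∈ S, closure {a} := by
      intro S
      have hS : S.Finite := Set.toFinite S
      conv_lhs => rw [← Set.biUnion_of_singleton S]
      exact hS.closure_biUnion _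
    refine ⟨(closure (closure C \ C))ᶜ, closure C,
      (isClosed_closure).isOpen_compl, isClosed_closure, ?_⟩
    apply Set.eq_of_subset_of_subset
    · intro c hcC
      refine ⟨?_, subset_closure hcC⟩
      intro hc
      rw [hclosure] at hc
      obtain ⟨m, hm, hcm⟩ := Set.mem_iUnion₂.mp hc
      have hmcl : m ∈ closure C := hm.1
      rw [hclosure] at hmcl
      obtain ⟨a, haC, hma⟩ := Set.mem_iUnion₂.mp hmcl
      exact hm.2 (hconv a m c haC hcC hma hcm)
    · rintro y ⟨hyU, hyK⟩
      by_contra hyC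
      exact hyU (subset_closure ⟨hyK, hyC⟩)
end

section
/- Let P = (P1, P2) be an index pair for an isolated invariant set S of a combinatorial multivector field on a finite topological space. Then P1 isolates S: P1 is closed, S ⊆ P1, every path in P1 with endpoints in S lies in S, and Π_V(S) ⊆ P1. -/
open CategoryTheory Limits

variable {X : Type} [TopologicalSpace X]

/-- `(P1, P2)` is an index pair for `S`: closed sets `P2 ⊆ P1` with positive invariance
of `P2` relative to `P1`, the exit set condition, and `S = Inv(P1 \ P2)`. -/
def MVField.IndexPair (V : MVField X) (S P1 P2 : Set X) : Prop :=
  IsClosed P1 ∧ IsClosed P2 ∧ P2 ⊆ P1 ∧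
    (∀ x ∈ P2, ∀ y ∈ V.Pi x ∩ P1, y ∈ P2) ∧
    (∀ x ∈ P1, (V.Pi x \ P1).Nonempty → x ∈ P2) ∧
    S = V.InvPart (P1 \ P2)


/-!
Points of `S = Inv(P1 \ P2)` lie outside `P2`, so by the exit condition (IP2) their images
under `Π_V` stay in `P1`. A path in `P1` that ends in `S` never meets `P2`, because by (IP1)
it could not leave `P2` again. Such a path, spliced between an essential solution through
its starting point and one through its endpoint, is an essential solution in `P1 \ P2`
through each of its points, so the whole path lies in `Inv(P1 \ P2) = S`.
-/

namespace MVField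

variable {V : MVField X}

theorem IsRegular.of_mem_mv {x y : X} (hx : V.IsRegular x) (hy : y ∈ V.mv x) :
    V.IsRegular y := by
  unfold IsRegular
  simp only [V.mv_eq x y hy]
  exact hx

theorem IsEssential.exists_ge_notMem_mv {φ : ℤ → X} (hφ : V.IsEssential φ) {x : X}
    (hx : V.IsRegular x) (m : ℤ) : ∃ k, m ≤ k ∧ φ k ∉ V.mv x := by
  by_cases hm : φ m ∈ V.mv x
  · obtain ⟨k, hmk, hk⟩ := (hφ.2 m (hx.of_mem_mv hm)).1 m
    exact ⟨k, hmk, V.mv_eq x _ hm ▸ hk⟩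
  · exact ⟨m, le_rfl, hm⟩

theorem IsEssential.exists_le_notMem_mv {φ : ℤ → X} (hφ : V.IsEssential φ) {x : X}
    (hx : V.IsRegular x) (m : ℤ) : ∃ k, k ≤ m ∧ φ k ∉ V.mv x := by
  by_cases hm : φ m ∈ V.mv x
  · obtain ⟨k, hkm, hk⟩ := (hφ.2 m (hx.of_mem_mv hm)).2 m
    exact ⟨k, hkm, V.mv_eq x _ hm ▸ hk⟩
  · exact ⟨m, le_rfl, hm⟩

theorem IsEssential.comp_add_const {φ : ℤ → X} (hφ : V.IsEssential φ) (c : ℤ) :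
    V.IsEssential (fun t => φ (t + c)) := by
  refine ⟨fun t => by simpa only [add_right_comm t 1 c] using hφ.1 (t + c),
    fun t hreg => ⟨fun m => ?_, fun m => ?_⟩⟩
  · obtain ⟨k, hmk, hk⟩ := hφ.exists_ge_notMem_mv hreg (m + c)
    exact ⟨k - c, by omega, by simpa using hk⟩
  · obtain ⟨k, hkm, hk⟩ := hφ.exists_le_notMem_mv hreg (m + c)
    exact ⟨k - c, by omega, by simpa using hk⟩

end MVField

def spliceSeq {α : Type*} (φ : ℤ → α) (γ : ℕ → α) (n : ℕ) (ψ : ℤ → α) (t : ℤ) : α :=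
  if t ≤ 0 then φ t else if (n : ℤ) ≤ t then ψ (t - n) else γ t.toNat

section spliceSeq

variable {α : Type*} {φ ψ : ℤ → α} {γ : ℕ → α} {n : ℕ}

theorem spliceSeq_of_nonpos {t : ℤ} (ht : t ≤ 0) : spliceSeq φ γ n ψ t = φ t :=
  if_pos ht

theorem spliceSeq_natCast (hφ : φ 0 = γ 0) (hψ : ψ 0 = γ n) {i : ℕ} (hi : i ≤ n) :
    spliceSeq φ γ n ψ i = γ i := by
  unfold spliceSeq
  split_ifs with h0 hn
  · obtain rfl : i = 0 := by omega
    exact hφ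
  · obtain rfl : i = n := by omega
    simpa using hψ
  · simp

theorem spliceSeq_of_le (hφ : φ 0 = γ 0) (hψ : ψ 0 = γ n) {t : ℤ} (ht : (n : ℤ) ≤ t) :
    spliceSeq φ γ n ψ t = ψ (t - n) := by
  unfold spliceSeq
  split_ifs with h0
  · obtain rfl : n = 0 := by omega
    obtain rfl : t = 0 := by omega
    simp [hφ, hψ]
  · rfl

theorem spliceSeq_mem {A : Set α} (hφ : Set.range φ ⊆ A) (hψ : Set.range ψ ⊆ A)
    (hγ : ∀ i ≤ n, γ i ∈ A) (t : ℤ) : spliceSeq φ γ n ψ t ∈ A := by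
  unfold spliceSeq
  split_ifs with h0 hn
  · exact hφ ⟨t, rfl⟩
  · exact hψ ⟨_, rfl⟩
  · exact hγ _ (by omega)

end spliceSeq

namespace MVField

variable {V : MVField X}

theorem IsEssential.spliceSeq {φ ψ : ℤ → X} {γ : ℕ → X} {n : ℕ} {A : Set X}
    (hφ : V.IsEssential φ) (hψ : V.IsEssential ψ) (hγ : V.IsPathIn A n γ)
    (hφγ : φ 0 = γ 0) (hψγ : ψ 0 = γ n) : V.IsEssential (spliceSeq φ γ n ψ) := by
  refine ⟨fun t => ?_, fun t hreg => ⟨fun m => ?_, fun m => ?_⟩⟩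
  · rcases le_or_gt (t + 1) 0 with h | h
    · rw [spliceSeq_of_nonpos h, spliceSeq_of_nonpos (by omega)]
      exact hφ.1 t
    rcases le_or_gt (n : ℤ) t with h' | h'
    · rw [spliceSeq_of_le hφγ hψγ h', spliceSeq_of_le hφγ hψγ (by omega), add_sub_right_comm]
      exact hψ.1 (t - n)
    · obtain ⟨i, rfl⟩ : ∃ i : ℕ, t = i := ⟨t.toNat, by omega⟩
      rw [spliceSeq_natCast hφγ hψγ (by omega), ← Nat.cast_succ,
        spliceSeq_natCast hφγ hψγ (by omega)]
      exact hγ.2 i (by omega)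
  · obtain ⟨k, hmk, hk⟩ := hψ.exists_ge_notMem_mv hreg (max m n - n)
    refine ⟨k + n, by omega, ?_⟩
    rwa [spliceSeq_of_le (t := k + n) hφγ hψγ (by omega), add_sub_cancel_right]
  · obtain ⟨k, hkm, hk⟩ := hφ.exists_le_notMem_mv hreg (min m 0)
    exact ⟨k, by omega, by rwa [spliceSeq_of_nonpos (t := k) (by omega)]⟩

theorem mem_invPart_of_isPathIn {A : Set X} {n : ℕ} {γ : ℕ → X} (hγ : V.IsPathIn A n γ)
    (h0 : γ 0 ∈ V.InvPart A) (hn : γ n ∈ V.InvPart A) {i : ℕ} (hi : i ≤ n) :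
    γ i ∈ V.InvPart A := by
  obtain ⟨-, φ, hφ, hφγ, hφA⟩ := h0
  obtain ⟨-, ψ, hψ, hψγ, hψA⟩ := hn
  refine ⟨hγ.1 i hi, fun t => spliceSeq φ γ n ψ (t + i),
    (hφ.spliceSeq hψ hγ hφγ hψγ).comp_add_const i, ?_, ?_⟩
  · simpa using spliceSeq_natCast hφγ hψγ hi
  · rintro _ ⟨t, rfl⟩
    exact spliceSeq_mem hφA hψA hγ.1 _

namespace IndexPair

variable {S P1 P2 : Set X}

theorem subset_diff (hP : V.IndexPair S P1 P2) : S ⊆ P1 \ P2 := by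
  rw [hP.2.2.2.2.2]
  exact fun _ hx => hx.1

theorem pi_subset (hP : V.IndexPair S P1 P2) {x : X} (hx : x ∈ P1 \ P2) : V.Pi x ⊆ P1 := by
  intro y hy
  by_contra hyP1
  exact hx.2 (hP.2.2.2.2.1 x hx.1 ⟨y, hy, hyP1⟩)

theorem mem_of_isPathIn (hP : V.IndexPair S P1 P2) {n : ℕ} {γ : ℕ → X}
    (hγ : V.IsPathIn P1 n γ) {i : ℕ} (hi : γ i ∈ P2) {j : ℕ} (hij : i ≤ j) (hjn : j ≤ n) :
    γ j ∈ P2 := by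
  induction j, hij using Nat.le_induction with
  | base => exact hi
  | succ j _ ih =>
    exact hP.2.2.2.1 _ (ih (by omega)) _ ⟨hγ.2 j (by omega), hγ.1 (j + 1) hjn⟩

theorem isPathIn_diff (hP : V.IndexPair S P1 P2) {n : ℕ} {γ : ℕ → X}
    (hγ : V.IsPathIn P1 n γ) (hn : γ n ∉ P2) : V.IsPathIn (P1 \ P2) n γ :=
  ⟨fun i hi => ⟨hγ.1 i hi, fun h => hn (hP.mem_of_isPathIn hγ h hi le_rfl)⟩, hγ.2⟩

end IndexPair

end MVField

theorem stmt15_general {X : Type} [TopologicalSpace X] (V : MVField X)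
    (S P1 P2 : Set X) (hP : V.IndexPair S P1 P2) :
    V.Isolates P1 S := by
  refine ⟨hP.1, fun x hx => (hP.subset_diff hx).1, fun n γ hγ h0 hn i hi => ?_,
    fun x hx => hP.pi_subset (hP.subset_diff hx)⟩
  have hγ' := hP.isPathIn_diff hγ (hP.subset_diff hn).2
  rw [hP.2.2.2.2.2] at h0 hn ⊢
  exact V.mem_invPart_of_isPathIn hγ' h0 hn hi

/-- If `(P1, P2)` is an index pair for an isolated invariant set `S`, then `P1`
isolates `S`. -/
theorem stmt15 {X : Type} [TopologicalSpace X] [Finite X] (V : MVField X)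
    (S P1 P2 : Set X) (hS : V.IsIsolatedInvariant S) (hP : V.IndexPair S P1 P2) :
    V.Isolates P1 S :=
  stmt15_general V S P1 P2 hP
end

section
/- If S is an isolated invariant set of a combinatorial multivector field on a finite topological space, then (cl S, mo S) with mo S = cl S \ S is a saturated index pair for S, i.e., it satisfies (IP1)–(IP3) and cl S \ mo S = S. -/
open CategoryTheory Limits

variable {X : Type} [TopologicalSpace X]

/-- For an isolated invariant set `S`, the pair `(cl S, mo S)` is a saturated index
pair for `S`. -/
theorem stmt16 {X : Type} [TopologicalSpace X] [Finite X] (V : MVField X) (S : Set X)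
    (hS : V.IsIsolatedInvariant S) :
    V.IndexPair S (closure S) (closure S \ S) ∧ closure S \ (closure S \ S) = S := by
  obtain ⟨hInv, N, hNcl, hSN, hpath, hPiN⟩ := hS
  -- In a finite space, closure of a set is the union of closures of its points.
  have hclchar : ∀ (A : Set X) (w : X), w ∈ closure A → ∃ a ∈ A, w ∈ closure {a} := by
    intro A w hw
    have h1 : A = ⋃ a ∈ A, {a} := (Set.biUnion_of_singleton A).symm
    have h2 : closure A = ⋃ a ∈ A, closure {a} := by
      conv_lhs => rw [h1]
      exact (Set.toFinite A).closure_biUnion _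
    rw [h2] at hw
    simpa using hw
  -- S is V-compatible.
  have hcomp : ∀ x ∈ S, ∀ y ∈ V.mv x, y ∈ S := by
    intro x hx y hy
    set γ : ℕ → X := fun i => if i = 1 then y else x with hγ
    have hyN : y ∈ N := hPiN x hx (Or.inr hy)
    have hxN : x ∈ N := hSN hx
    have hp : V.IsPathIn N 2 γ := by
      constructor
      · intro i _
        by_cases h : i = 1 <;> simp [hγ, h, hyN, hxN]
      · intro i hi
        interval_cases i
        · simpa [hγ, MVField.Pi] using Or.inr hy
        · have : x ∈ V.mv y := by rw [V.mv_eq x y hy]; exact V.self_mem x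
          simpa [hγ, MVField.Pi] using Or.inr this
    have := hpath 2 γ hp (by simpa [hγ]) (by simpa [hγ]) 1 (by norm_num)
    simpa [hγ] using this
  -- Key lemma: a point of cl S whose closure meets S lies in S.
  have hK : ∀ w ∈ closure S, ∀ z ∈ closure ({w} : Set X), z ∈ S → w ∈ S := by
    intro w hw z hzw hzS
    obtain ⟨s, hs, hws⟩ := hclchar S w hw
    set γ : ℕ → X := fun i => if i = 0 then s else if i = 1 then w else z with hγ
    have hwN : w ∈ N := hPiN s hs (Or.inl hws)
    have hp : V.IsPathIn N 2 γ := by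
      constructor
      · intro i _
        by_cases h0 : i = 0
        · simpa [hγ, h0] using hSN hs
        by_cases h1 : i = 1
        · simpa [hγ, h0, h1] using hwN
        · simpa [hγ, h0, h1] using hSN hzS
      · intro i hi
        interval_cases i
        · simpa [hγ, MVField.Pi] using Or.inl hws
        · simpa [hγ, MVField.Pi] using Or.inl hzw
    have := hpath 2 γ hp (by simpa [hγ]) (by simpa [hγ]) 1 (by norm_num)
    simpa [hγ] using this
  -- cl S \ S is closed.
  have hmo : IsClosed (closure S \ S) := by
    rw [← closure_subset_iff_isClosed]
    intro z hz
    obtain ⟨w, hw, hzw⟩ := hclchar _ z hz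
    have hzcl : z ∈ closure S := by
      have : closure ({w} : Set X) ⊆ closure (closure S) :=
        closure_mono (by simpa using hw.1)
      simpa using this hzw
    refine ⟨hzcl, fun hzS => hw.2 (hK w hw.1 z hzw hzS)⟩
  have hdiff : closure S \ (closure S \ S) = S := Set.diff_diff_cancel_left subset_closure
  refine ⟨⟨isClosed_closure, hmo, Set.diff_subset, ?_, ?_, ?_⟩, hdiff⟩
  · -- positive invariance
    rintro x ⟨hxcl, hxS⟩ y ⟨hyPi, hycl⟩
    refine ⟨hycl, fun hyS => hxS ?_⟩
    rcases hyPi with h | h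
    · exact hK x hxcl y h hyS
    · have : x ∈ V.mv y := by rw [V.mv_eq x y h]; exact V.self_mem x
      exact hcomp y hyS x this
  · -- exit set condition
    intro x hx ⟨y, hyPi, hycl⟩
    refine ⟨hx, fun hxS => hycl ?_⟩
    rcases hyPi with h | h
    · exact closure_mono (Set.singleton_subset_iff.mpr hxS) h
    · exact subset_closure (hcomp x hxS y h)
  · rw [hdiff]; exact hInv.symm
end

section
/- An invariant set A of a combinatorial multivector field V on an invariant finite topological space X is an attractor (i.e., Π_V(A) = A) if and only if A is closed, V-compatible and invariant, if and only if A is a closed isolated invariant set. -/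
open CategoryTheory Limits

variable {X : Type} [TopologicalSpace X]

/-- For an invariant set `A` of a multivector field on an invariant finite topological
space `X`, the following are equivalent: `A` is an attractor (`Π_V(A) = A`); `A` is
closed, `V`-compatible and invariant; `A` is a closed isolated invariant set. -/
theorem stmt18 {X : Type} [TopologicalSpace X] [Finite X] (V : MVField X)
    (hX : V.IsInvariant Set.univ) (A : Set X) (hA : V.IsInvariant A) :
    ((⋃ x ∈ A, V.Pi x) = A ↔ IsClosed A ∧ V.IsCompatible A ∧ V.IsInvariant A) ∧
    ((⋃ x ∈ A, V.Pi x) = A ↔ IsClosed A ∧ V.IsIsolatedInvariant A) := by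
  have key : (⋃ x ∈ A, V.Pi x) = A ↔
      (∀ x ∈ A, closure {x} ⊆ A) ∧ (∀ x ∈ A, V.mv x ⊆ A) := by
    constructor
    · intro h
      have hsub : ∀ x ∈ A, V.Pi x ⊆ A := by
        intro x hx
        rw [← h]
        exact Set.subset_biUnion_of_mem hx
      exact ⟨fun x hx => (Set.union_subset_iff.mp (hsub x hx)).1,
             fun x hx => (Set.union_subset_iff.mp (hsub x hx)).2⟩
    · rintro ⟨h1, h2⟩
      apply Set.Subset.antisymm
      · exact Set.iUnion₂_subset fun x hx => Set.union_subset (h1 x hx) (h2 x hx)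
      · intro x hx
        exact Set.mem_biUnion hx (Or.inl (subset_closure rfl))
  have hclosed : (∀ x ∈ A, closure {x} ⊆ A) ↔ IsClosed A := by
    constructor
    · intro h
      have hAe : A = ⋃ x ∈ A, closure {x} := by
        apply Set.Subset.antisymm
        · intro x hx; exact Set.mem_biUnion hx (subset_closure rfl)
        · exact Set.iUnion₂_subset h
      rw [hAe]
      exact Set.Finite.isClosed_biUnion (Set.toFinite A) fun x _ => isClosed_closure
    · intro h x hx
      calc closure {x} ⊆ closure A := closure_mono (Set.singleton_subset_iff.mpr hx)
        _ = A := h.closure_eq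
  have hcomp : (∀ x ∈ A, V.mv x ⊆ A) ↔ V.IsCompatible A := by
    constructor
    · intro h x
      rcases Set.eq_empty_or_nonempty (V.mv x ∩ A) with he | ⟨y, hy, hyA⟩
      · exact Or.inl he
      · exact Or.inr (by rw [← V.mv_eq x y hy]; exact h y hyA)
    · intro h x hx
      rcases h x with he | hs
      · exact absurd he (Set.Nonempty.ne_empty ⟨x, V.self_mem x, hx⟩)
      · exact hs
  have hisoBwd : V.IsIsolatedInvariant A → ∀ x ∈ A, V.mv x ⊆ A := by
    rintro ⟨_, N, _, hAN, hpath, hPi⟩ x hx y hy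
    set γ : ℕ → X := fun i => if i = 1 then y else x with hγdef
    have hmvyx : V.mv y = V.mv x := V.mv_eq x y hy
    have hγpath : V.IsPathIn N 2 γ := by
      constructor
      · intro i _
        by_cases h1 : i = 1
        · simpa [γ, h1] using hPi x hx (Or.inr hy)
        · simpa [γ, h1] using hAN hx
      · intro i hi
        interval_cases i
        · show γ 1 ∈ V.Pi (γ 0)
          simp only [γ]
          norm_num
          exact Or.inr hy
        · show γ 2 ∈ V.Pi (γ 1)
          simp only [γ]
          norm_num
          exact Or.inr (by rw [hmvyx]; exact V.self_mem x)
    have := hpath 2 γ hγpath (by simp [γ, hx]) (by simp [γ, hx]) 1 (by norm_num)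
    simpa [γ] using this
  have hisoFwd : IsClosed A → (∀ x ∈ A, V.mv x ⊆ A) → V.IsIsolatedInvariant A := by
    intro hc hm
    exact ⟨hA, A, hc, subset_rfl, fun n γ hγ _ _ i hi => hγ.1 i hi,
      fun x hx => Set.union_subset (hclosed.mpr hc x hx) (hm x hx)⟩
  constructor
  · rw [key]
    constructor
    · rintro ⟨h1, h2⟩; exact ⟨hclosed.mp h1, hcomp.mp h2, hA⟩
    · rintro ⟨h1, h2, _⟩; exact ⟨hclosed.mpr h1, hcomp.mpr h2⟩
  · rw [key]
    constructor
    · rintro ⟨h1, h2⟩; exact ⟨hclosed.mp h1, hisoFwd (hclosed.mp h1) h2⟩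
    · rintro ⟨h1, h2⟩; exact ⟨hclosed.mpr h1, hisoBwd h2⟩
end

section
/- An invariant set R of a combinatorial multivector field V on an invariant finite topological space X is a repeller (i.e., Π_V^{-1}(R) = R) if and only if R is open, V-compatible and invariant, if and only if R is an open isolated invariant set. -/
open CategoryTheory Limits

variable {X : Type} [TopologicalSpace X]

/-- For an invariant set `R` of a multivector field on an invariant finite topological
space `X`, the following are equivalent: `R` is a repeller (`Π_V⁻¹(R) = R`); `R` is
open, `V`-compatible and invariant; `R` is an open isolated invariant set. -/
theorem stmt19 {X : Type} [TopologicalSpace X] [Finite X] (V : MVField X)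
    (hX : V.IsInvariant Set.univ) (R : Set X) (hR : V.IsInvariant R) :
    ({x : X | (V.Pi x ∩ R).Nonempty} = R ↔ IsOpen R ∧ V.IsCompatible R ∧ V.IsInvariant R) ∧
    ({x : X | (V.Pi x ∩ R).Nonempty} = R ↔ IsOpen R ∧ V.IsIsolatedInvariant R) := by
  -- If `R` is a repeller, `Π_V(x) ∩ R ≠ ∅ ↔ x ∈ R`.
  have triv : ∀ x ∈ R, (V.Pi x ∩ R).Nonempty := fun x hx =>
    ⟨x, Or.inl (subset_closure rfl), hx⟩
  have key : {x : X | (V.Pi x ∩ R).Nonempty} = R ↔ IsOpen R ∧ V.IsCompatible R := by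
    constructor
    · intro h
      have hmem : ∀ x, (V.Pi x ∩ R).Nonempty → x ∈ R := fun x hx => h ▸ hx
      constructor
      · rw [← isClosed_compl_iff]
        have hc : Rᶜ = ⋃ x ∈ Rᶜ, closure {x} := by
          ext y
          constructor
          · intro hy; exact Set.mem_biUnion hy (subset_closure rfl)
          · intro hy
            obtain ⟨x, hx, hyx⟩ := Set.mem_iUnion₂.mp hy
            intro hyR
            exact hx (hmem x ⟨y, Or.inl hyx, hyR⟩)
        rw [hc]
        exact Set.Finite.isClosed_biUnion (Set.toFinite _) fun _ _ => isClosed_closure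
      · intro x
        by_cases hx : (V.mv x ∩ R).Nonempty
        · right
          obtain ⟨y, hy, hyR⟩ := hx
          intro z hz
          exact hmem z ⟨y, Or.inr (by rw [V.mv_eq x z hz]; exact hy), hyR⟩
        · left; exact Set.not_nonempty_iff_eq_empty.mp hx
    · rintro ⟨hopen, hcompat⟩
      ext x
      simp only [Set.mem_setOf_eq]
      constructor
      · rintro ⟨y, hy, hyR⟩
        cases hy with
        | inl hcl =>
          by_contra hxR
          have hsub : closure {x} ⊆ Rᶜ := by
            apply closure_minimal _ (isClosed_compl_iff.mpr hopen)
            simpa using hxR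
          exact hsub hcl hyR
        | inr hmv =>
          cases hcompat x with
          | inl h0 => exact absurd (Set.mem_inter hmv hyR) (by rw [h0]; exact id)
          | inr h0 => exact h0 (V.self_mem x)
      · exact triv x
  constructor
  · exact key.trans ⟨fun ⟨a, b⟩ => ⟨a, b, hR⟩, fun ⟨a, b, _⟩ => ⟨a, b⟩⟩
  · constructor
    · intro h
      refine ⟨(key.mp h).1, hR, Set.univ, isClosed_univ, Set.subset_univ _, ?_, fun _ _ => Set.subset_univ _⟩
      intro n γ hγ h0 hn i hi
      have hmem : ∀ x, (V.Pi x ∩ R).Nonempty → x ∈ R := fun x hx => h ▸ hx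
      have back : ∀ k, k ≤ n → γ (n - k) ∈ R := by
        intro k
        induction k with
        | zero => intro _; simpa using hn
        | succ k ih =>
          intro hk
          have hkn : k ≤ n := Nat.le_of_succ_le hk
          have h1 : γ (n - k) ∈ R := ih hkn
          have h2 : n - (k + 1) + 1 = n - k := by omega
          have h3 : γ (n - (k + 1) + 1) ∈ V.Pi (γ (n - (k + 1))) :=
            hγ.2 _ (by omega)
          rw [h2] at h3
          exact hmem _ ⟨γ (n - k), h3, h1⟩
      have : γ (n - (n - i)) ∈ R := back (n - i) (by omega)
      rwa [show n - (n - i) = i by omega] at this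
    · rintro ⟨hopen, _, N, _, hRN, hpath, hPi⟩
      ext x
      simp only [Set.mem_setOf_eq]
      constructor
      · rintro ⟨y, hy, hyR⟩
        cases hy with
        | inl hcl =>
          by_contra hxR
          have hsub : closure {x} ⊆ Rᶜ := by
            apply closure_minimal _ (isClosed_compl_iff.mpr hopen)
            simpa using hxR
          exact hsub hcl hyR
        | inr hmv =>
          -- `y ∈ [x] ∩ R`; use the path `y, x, y` in `N`.
          set γ : ℕ → X := fun i => if i = 1 then x else y with hγdef
          have hmvyx : x ∈ V.mv y := by
            rw [V.mv_eq x y hmv]; exact V.self_mem x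
          have hxN : x ∈ N := hPi y hyR (Or.inr hmvyx)
          have hp : V.IsPathIn N 2 γ := by
            constructor
            · intro i hi
              by_cases h1 : i = 1
              · simp [hγdef, h1, hxN]
              · simp [hγdef, h1, hRN hyR]
            · intro i hi
              interval_cases i
              · simpa [hγdef, MVField.Pi] using Or.inr hmvyx
              · simpa [hγdef, MVField.Pi] using (Or.inr hmv : y ∈ V.Pi x)
          have := hpath 2 γ hp (by simp [hγdef, hyR]) (by simp [hγdef, hyR]) 1 (by norm_num)
          simpa [hγdef] using this
      · exact triv x
end
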